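/- For every positive integer n, the polynomial D_n(t) = t^9 - (n+3)t^8 - (n-4)t^7 + (2n-8)t^6 + (2n+8)t^5 + (2n-8)t^4 - (2n-11)t^3 + (3n-5)t^2 + (3n+4)t - 4(n+1) has exactly three distinct positive real roots. -/

import Mathlib

open Polynomial

/-- The denominator polynomial `D_n(t)`, over `ℝ`. -/
noncomputable def Dpoly (n : ℕ) : Polynomial ℝ :=
  X ^ 9 - C ((n : ℝ) + 3) * X ^ 8 - C ((n : ℝ) - 4) * X ^ 7 + C (2 * (n : ℝ) - 8) * X ^ 6
    + C (2 * (n : ℝ) + 8) * X ^ 5 + C (2 * (n : ℝ) - 8) * X ^ 4 - C (2 * (n : ℝ) - 11) * X ^ 3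
    + C (3 * (n : ℝ) - 5) * X ^ 2 + C (3 * (n : ℝ) + 4) * X - C (4 * ((n : ℝ) + 1))

/-!
Write `D_n = A + n B` with `A, B ∈ ℤ[t]` independent of `n`. For `n ≥ 1` the positive axis
splits into four regions: on `[0, 11/10]` `D_n` is strictly increasing, on `[11/10, 2]` strictly
concave, on `[2, n + 2]` negative, and on `[n + 2, ∞)` strictly convex. Each region estimate
reduces, through the sign of `B` (or `B'`, `B''`), to an `n`-free polynomial inequality on an
interval. Since `D_n(0) < 0 < D_n(1)`, `D_n(2) < 0`, `D_n(n + 2) < 0 < D_n(n + 5)`, there is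
exactly one root in each of the three regions other than `[2, n + 2]`.
-/

open Set

lemma StrictConvexOn.subsingleton_setOf_eq_zero {f : ℝ → ℝ} {s : Set ℝ}
    (hf : StrictConvexOn ℝ s f) {x : ℝ} (hx : IsLeast s x) (hfx : f x < 0) :
    {y ∈ s | f y = 0}.Subsingleton := by
  rintro y ⟨hy, hfy⟩ z ⟨hz, hfz⟩
  wlog hyz : y < z generalizing y z
  · rcases (not_lt.1 hyz).eq_or_lt with h | h
    exacts [h.symm, (this hz hfz hy hfy h).symm]
  have hxy : x < y := (hx.2 hy).lt_of_ne (by rintro rfl; linarith)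
  have := hf.lt_on_openSegment hx.1 hz (hxy.trans hyz).ne
    (by rw [openSegment_eq_Ioo (hxy.trans hyz)]; exact ⟨hxy, hyz⟩)
  rw [hfy, hfz, max_eq_right hfx.le] at this
  exact absurd this (lt_irrefl 0)

lemma StrictConcaveOn.subsingleton_setOf_eq_zero {f : ℝ → ℝ} {s : Set ℝ}
    (hf : StrictConcaveOn ℝ s f) {x : ℝ} (hx : IsLeast s x) (hfx : 0 < f x) :
    {y ∈ s | f y = 0}.Subsingleton := by
  simpa using hf.neg.subsingleton_setOf_eq_zero hx (by simpa using hfx)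

lemma Polynomial.exists_isRoot_Ioo_of_neg_of_pos (p : ℝ[X]) {a b : ℝ} (hab : a ≤ b)
    (ha : p.eval a < 0) (hb : 0 < p.eval b) : ∃ r ∈ Ioo a b, p.IsRoot r :=
  intermediate_value_Ioo hab p.continuous.continuousOn ⟨ha, hb⟩

lemma Polynomial.exists_isRoot_Ioo_of_pos_of_neg (p : ℝ[X]) {a b : ℝ} (hab : a ≤ b)
    (ha : 0 < p.eval a) (hb : p.eval b < 0) : ∃ r ∈ Ioo a b, p.IsRoot r :=
  intermediate_value_Ioo' hab p.continuous.continuousOn ⟨hb, ha⟩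

lemma Polynomial.iterate_deriv_eval {𝕜 : Type*} [NontriviallyNormedField 𝕜] (p : 𝕜[X]) (k : ℕ) :
    deriv^[k] (fun x => p.eval x) = fun x => (derivative^[k] p).eval x := by
  induction k generalizing p with
  | zero => rfl
  | succ k ih =>
    have h : _root_.deriv (fun x => p.eval x) = fun x => p.derivative.eval x := by
      ext x; exact p.deriv
    rw [Function.iterate_succ_apply, Function.iterate_succ_apply, h, ih]

section Dpoly

variable {n : ℕ} {t : ℝ}

lemma eval_Dpoly (n : ℕ) (t : ℝ) : (Dpoly n).eval t =
    (t^9 - 3*t^8 + 4*t^7 - 8*t^6 + 8*t^5 - 8*t^4 + 11*t^3 - 5*t^2 + 4*t - 4)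
      + n * (-t^8 - t^7 + 2*t^6 + 2*t^5 + 2*t^4 - 2*t^3 + 3*t^2 + 3*t - 4) := by
  simp only [Dpoly, eval_sub, eval_add, eval_mul, eval_pow, eval_C, eval_X]
  ring

lemma eval_derivative_Dpoly (n : ℕ) (t : ℝ) : (derivative (Dpoly n)).eval t =
    (9*t^8 - 24*t^7 + 28*t^6 - 48*t^5 + 40*t^4 - 32*t^3 + 33*t^2 - 10*t + 4)
      + n * (-8*t^7 - 7*t^6 + 12*t^5 + 10*t^4 + 8*t^3 - 6*t^2 + 6*t + 3) := by
  simp only [Dpoly, derivative_sub, derivative_add, derivative_mul, derivative_X_pow,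
    derivative_C, derivative_X, eval_sub, eval_add, eval_mul, eval_pow, eval_C, eval_X,
    eval_one, eval_zero]
  ring

lemma eval_derivative_derivative_Dpoly (n : ℕ) (t : ℝ) :
    (derivative (derivative (Dpoly n))).eval t =
      (72*t^7 - 168*t^6 + 168*t^5 - 240*t^4 + 160*t^3 - 96*t^2 + 66*t - 10)
        + n * (-56*t^6 - 42*t^5 + 60*t^4 + 40*t^3 + 24*t^2 - 12*t + 6) := by
  simp only [Dpoly, derivative_sub, derivative_add, derivative_mul, derivative_X_pow,
    derivative_C, derivative_X, derivative_zero, derivative_one, eval_sub, eval_add, eval_mul,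
    eval_pow, eval_C, eval_X, eval_one, eval_zero]
  ring

/-! The `n`-free inequalities below are certified by the nonnegativity of the Bernstein
coefficients on the interval in question (of the Taylor coefficients at `3` on `[3, ∞)`):
each is a nonnegative combination of the products of powers passed to `linarith`. -/

lemma eval_derivative_Dpoly_pos (hn : 0 < n) (ht₀ : 0 ≤ t) (ht₁ : t ≤ 11/10) :
    0 < (derivative (Dpoly n)).eval t := by
  have hv : 0 ≤ 11/10 - t := by linarith
  have hB : 0 ≤ -8*t^7 - 7*t^6 + 12*t^5 + 10*t^4 + 8*t^3 - 6*t^2 + 6*t + 3 := by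
    linarith [pow_nonneg hv 7, mul_nonneg ht₀ (pow_nonneg hv 6),
      mul_nonneg (pow_nonneg ht₀ 2) (pow_nonneg hv 5),
      mul_nonneg (pow_nonneg ht₀ 3) (pow_nonneg hv 4),
      mul_nonneg (pow_nonneg ht₀ 4) (pow_nonneg hv 3),
      mul_nonneg (pow_nonneg ht₀ 5) (pow_nonneg hv 2),
      mul_nonneg (pow_nonneg ht₀ 6) hv, pow_nonneg ht₀ 7]
  have hAB : 1 ≤ 9*t^8 - 32*t^7 + 21*t^6 - 36*t^5 + 50*t^4 - 24*t^3 + 27*t^2 - 4*t + 7 := by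
    linarith [pow_nonneg hv 8, mul_nonneg ht₀ (pow_nonneg hv 7),
      mul_nonneg (pow_nonneg ht₀ 2) (pow_nonneg hv 6),
      mul_nonneg (pow_nonneg ht₀ 3) (pow_nonneg hv 5),
      mul_nonneg (pow_nonneg ht₀ 4) (pow_nonneg hv 4),
      mul_nonneg (pow_nonneg ht₀ 5) (pow_nonneg hv 3),
      mul_nonneg (pow_nonneg ht₀ 6) (pow_nonneg hv 2),
      mul_nonneg (pow_nonneg ht₀ 7) hv, pow_nonneg ht₀ 8]
  have hn' : (0 : ℝ) ≤ n - 1 := sub_nonneg.2 (Nat.one_le_cast.2 hn)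
  rw [eval_derivative_Dpoly]
  linarith [mul_nonneg hn' hB]

lemma eval_derivative_derivative_Dpoly_neg (hn : 0 < n) (ht₁ : 11/10 ≤ t) (ht₂ : t ≤ 2) :
    (derivative (derivative (Dpoly n))).eval t < 0 := by
  have hu : 0 ≤ t - 11/10 := by linarith
  have hv : 0 ≤ 2 - t := by linarith
  have hB : -56*t^6 - 42*t^5 + 60*t^4 + 40*t^3 + 24*t^2 - 12*t + 6 ≤ 0 := by
    linarith [pow_nonneg hv 6, mul_nonneg hu (pow_nonneg hv 5),
      mul_nonneg (pow_nonneg hu 2) (pow_nonneg hv 4),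
      mul_nonneg (pow_nonneg hu 3) (pow_nonneg hv 3),
      mul_nonneg (pow_nonneg hu 4) (pow_nonneg hv 2),
      mul_nonneg (pow_nonneg hu 5) hv, pow_nonneg hu 6]
  have hAB : 72*t^7 - 224*t^6 + 126*t^5 - 180*t^4 + 200*t^3 - 72*t^2 + 54*t - 4 ≤ -1 := by
    linarith [pow_nonneg hv 7, mul_nonneg hu (pow_nonneg hv 6),
      mul_nonneg (pow_nonneg hu 2) (pow_nonneg hv 5),
      mul_nonneg (pow_nonneg hu 3) (pow_nonneg hv 4),
      mul_nonneg (pow_nonneg hu 4) (pow_nonneg hv 3),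
      mul_nonneg (pow_nonneg hu 5) (pow_nonneg hv 2),
      mul_nonneg (pow_nonneg hu 6) hv, pow_nonneg hu 7]
  have hn' : (0 : ℝ) ≤ n - 1 := sub_nonneg.2 (Nat.one_le_cast.2 hn)
  rw [eval_derivative_derivative_Dpoly]
  linarith [mul_nonneg hn' (neg_nonneg.2 hB)]

lemma eval_Dpoly_neg (hn : 0 < n) (ht₂ : 2 ≤ t) (ht : t ≤ n + 2) : (Dpoly n).eval t < 0 := by
  have hu : 0 ≤ t - 2 := by linarith
  rw [eval_Dpoly]
  rcases le_or_gt t 3 with ht₃ | ht₃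
  · have hv : 0 ≤ 3 - t := by linarith
    have hB : -t^8 - t^7 + 2*t^6 + 2*t^5 + 2*t^4 - 2*t^3 + 3*t^2 + 3*t - 4 ≤ 0 := by
      linarith [pow_nonneg hv 8, mul_nonneg hu (pow_nonneg hv 7),
        mul_nonneg (pow_nonneg hu 2) (pow_nonneg hv 6),
        mul_nonneg (pow_nonneg hu 3) (pow_nonneg hv 5),
        mul_nonneg (pow_nonneg hu 4) (pow_nonneg hv 4),
        mul_nonneg (pow_nonneg hu 5) (pow_nonneg hv 3),
        mul_nonneg (pow_nonneg hu 6) (pow_nonneg hv 2),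
        mul_nonneg (pow_nonneg hu 7) hv, pow_nonneg hu 8]
    have hAB : t^9 - 4*t^8 + 3*t^7 - 6*t^6 + 10*t^5 - 6*t^4 + 9*t^3 - 2*t^2 + 7*t - 8 ≤ -1 := by
      linarith [pow_nonneg hv 9, mul_nonneg hu (pow_nonneg hv 8),
        mul_nonneg (pow_nonneg hu 2) (pow_nonneg hv 7),
        mul_nonneg (pow_nonneg hu 3) (pow_nonneg hv 6),
        mul_nonneg (pow_nonneg hu 4) (pow_nonneg hv 5),
        mul_nonneg (pow_nonneg hu 5) (pow_nonneg hv 4),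
        mul_nonneg (pow_nonneg hu 6) (pow_nonneg hv 3),
        mul_nonneg (pow_nonneg hu 7) (pow_nonneg hv 2),
        mul_nonneg (pow_nonneg hu 8) hv, pow_nonneg hu 9]
    have hn' : (0 : ℝ) ≤ n - 1 := sub_nonneg.2 (Nat.one_le_cast.2 hn)
    linarith [mul_nonneg hn' (neg_nonneg.2 hB)]
  · -- for `t ≥ 3` compare `n` with `t - 2` instead of `1`
    have hw : 0 ≤ t - 3 := by linarith
    have hB : -t^8 - t^7 + 2*t^6 + 2*t^5 + 2*t^4 - 2*t^3 + 3*t^2 + 3*t - 4 ≤ 0 := by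
      linarith [pow_nonneg hw 8, pow_nonneg hw 7, pow_nonneg hw 6, pow_nonneg hw 5,
        pow_nonneg hw 4, pow_nonneg hw 3, pow_nonneg hw 2]
    have hAB : -2*t^8 + 8*t^7 - 10*t^6 + 6*t^5 - 14*t^4 + 18*t^3 - 8*t^2 - 6*t + 4 < 0 := by
      linarith [pow_nonneg hw 8, pow_nonneg hw 7, pow_nonneg hw 6, pow_nonneg hw 5,
        pow_nonneg hw 4, pow_nonneg hw 3, pow_nonneg hw 2]
    have hn' : (0 : ℝ) ≤ n - (t - 2) := by linarith
    linarith [mul_nonneg hn' (neg_nonneg.2 hB)]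

lemma eval_derivative_derivative_Dpoly_pos (hn : 0 < n) (ht : n + 2 ≤ t) :
    0 < (derivative (derivative (Dpoly n))).eval t := by
  have hw : 0 ≤ t - 3 := by linarith [(Nat.one_le_cast.2 hn : (1 : ℝ) ≤ n)]
  have hB : -56*t^6 - 42*t^5 + 60*t^4 + 40*t^3 + 24*t^2 - 12*t + 6 ≤ 0 := by
    linarith [pow_nonneg hw 6, pow_nonneg hw 5, pow_nonneg hw 4, pow_nonneg hw 3,
      pow_nonneg hw 2]
  have hAB : 0 < 16*t^7 - 98*t^6 + 312*t^5 - 320*t^4 + 104*t^3 - 156*t^2 + 96*t - 22 := by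
    linarith [pow_nonneg hw 7, pow_nonneg hw 6, pow_nonneg hw 5, pow_nonneg hw 4,
      pow_nonneg hw 3, pow_nonneg hw 2]
  have hn' : (0 : ℝ) ≤ (t - 2) - n := by linarith
  rw [eval_derivative_derivative_Dpoly]
  linarith [mul_nonneg hn' (neg_nonneg.2 hB)]

lemma eval_Dpoly_zero_neg (n : ℕ) : (Dpoly n).eval 0 < 0 := by
  rw [eval_Dpoly]
  linarith [(Nat.cast_nonneg n : (0 : ℝ) ≤ n)]

lemma eval_Dpoly_one_pos (hn : 0 < n) : 0 < (Dpoly n).eval 1 := by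
  rw [eval_Dpoly]
  linarith [(Nat.cast_pos.2 hn : (0 : ℝ) < n)]

lemma eval_Dpoly_add_five_pos (hn : 0 < n) : 0 < (Dpoly n).eval ((n : ℝ) + 5) := by
  have hm : (0 : ℝ) ≤ n - 1 := sub_nonneg.2 (Nat.one_le_cast.2 hn)
  rw [eval_Dpoly]
  linarith [pow_nonneg hm 8, pow_nonneg hm 7, pow_nonneg hm 6, pow_nonneg hm 5,
    pow_nonneg hm 4, pow_nonneg hm 3, pow_nonneg hm 2, hm]

lemma strictMonoOn_eval_Dpoly (hn : 0 < n) :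
    StrictMonoOn (fun t => (Dpoly n).eval t) (Icc 0 (11/10)) := by
  refine strictMonoOn_of_deriv_pos (convex_Icc _ _) (Dpoly n).continuous.continuousOn ?_
  intro t ht
  rw [interior_Icc] at ht
  rw [Polynomial.deriv]
  exact eval_derivative_Dpoly_pos hn ht.1.le ht.2.le

lemma strictConcaveOn_eval_Dpoly (hn : 0 < n) :
    StrictConcaveOn ℝ (Icc (11/10) 2) (fun t => (Dpoly n).eval t) := by
  refine strictConcaveOn_of_deriv2_neg' (convex_Icc _ _) (Dpoly n).continuous.continuousOn ?_
  intro t ht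
  rw [Polynomial.iterate_deriv_eval]
  exact eval_derivative_derivative_Dpoly_neg hn ht.1 ht.2

lemma strictConvexOn_eval_Dpoly (hn : 0 < n) :
    StrictConvexOn ℝ (Ici ((n : ℝ) + 2)) (fun t => (Dpoly n).eval t) := by
  refine strictConvexOn_of_deriv2_pos' (convex_Ici _) (Dpoly n).continuous.continuousOn ?_
  intro t ht
  rw [Polynomial.iterate_deriv_eval]
  exact eval_derivative_derivative_Dpoly_pos hn ht

lemma eval_Dpoly_eleven_tenths_pos (hn : 0 < n) : 0 < (Dpoly n).eval (11/10) :=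
  (eval_Dpoly_one_pos hn).trans <| strictMonoOn_eval_Dpoly hn
    ⟨zero_le_one, by norm_num⟩ ⟨by norm_num, le_rfl⟩ (by norm_num)

lemma eq_of_isRoot_Dpoly (hn : 0 < n) {r₁ r₂ r₃ : ℝ} (h₁ : r₁ ∈ Ioo 0 1)
    (h₂ : r₂ ∈ Ioo (11/10) 2) (h₃ : (n : ℝ) + 2 < r₃) (hr₁ : (Dpoly n).IsRoot r₁)
    (hr₂ : (Dpoly n).IsRoot r₂) (hr₃ : (Dpoly n).IsRoot r₃) (ht : 0 < t)
    (hroot : (Dpoly n).IsRoot t) : t = r₁ ∨ t = r₂ ∨ t = r₃ := by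
  rcases le_or_gt t (11/10) with ht₁ | ht₁
  · left
    refine (strictMonoOn_eval_Dpoly hn).injOn ⟨ht.le, ht₁⟩ ⟨h₁.1.le, by linarith [h₁.2]⟩ ?_
    exact hroot.eq_zero.trans hr₁.eq_zero.symm
  rcases lt_or_ge t 2 with ht₂ | ht₂
  · right; left
    exact (strictConcaveOn_eval_Dpoly hn).subsingleton_setOf_eq_zero (isLeast_Icc (by norm_num))
      (eval_Dpoly_eleven_tenths_pos hn) ⟨⟨ht₁.le, ht₂.le⟩, hroot⟩ ⟨⟨h₂.1.le, h₂.2.le⟩, hr₂⟩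
  rcases le_or_gt t (n + 2) with ht₃ | ht₃
  · exact absurd hroot (eval_Dpoly_neg hn ht₂ ht₃).ne
  · right; right
    exact (strictConvexOn_eval_Dpoly hn).subsingleton_setOf_eq_zero isLeast_Ici
      (eval_Dpoly_neg hn (le_add_of_nonneg_left n.cast_nonneg) le_rfl) ⟨ht₃.le, hroot⟩
      ⟨h₃.le, hr₃⟩

end Dpoly

theorem stmt_4 (n : ℕ) (hn : 0 < n) :
    {t : ℝ | 0 < t ∧ (Dpoly n).IsRoot t}.ncard = 3 := by
  have hn' : (0 : ℝ) ≤ n := Nat.cast_nonneg n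
  obtain ⟨r₁, h₁, hr₁⟩ := (Dpoly n).exists_isRoot_Ioo_of_neg_of_pos zero_le_one
    (eval_Dpoly_zero_neg n) (eval_Dpoly_one_pos hn)
  obtain ⟨r₂, h₂, hr₂⟩ := (Dpoly n).exists_isRoot_Ioo_of_pos_of_neg (by norm_num)
    (eval_Dpoly_eleven_tenths_pos hn) (eval_Dpoly_neg hn le_rfl (by linarith))
  obtain ⟨r₃, h₃, hr₃⟩ := (Dpoly n).exists_isRoot_Ioo_of_neg_of_pos (by linarith)
    (eval_Dpoly_neg hn (by linarith) le_rfl) (eval_Dpoly_add_five_pos hn)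
  refine ncard_eq_three.2 ⟨r₁, r₂, r₃, ?_, ?_, ?_, ?_⟩
  · exact ne_of_lt (by linarith [h₁.2, h₂.1])
  · exact ne_of_lt (by linarith [h₁.2, h₃.1])
  · exact ne_of_lt (by linarith [h₂.2, h₃.1])
  ext t
  refine ⟨fun ⟨ht, hroot⟩ => eq_of_isRoot_Dpoly hn h₁ h₂ h₃.1 hr₁ hr₂ hr₃ ht hroot, ?_⟩
  rintro (rfl | rfl | rfl)
  exacts [⟨h₁.1, hr₁⟩, ⟨by linarith [h₂.1], hr₂⟩, ⟨by linarith [h₃.1], hr₃⟩]
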